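/- arXiv:2210.02690 — 3 statements merged into one kernel-verified Lean document; each statement's English description precedes it below -/
import Mathlib

section
/- Let V and Q be finite dimensional real inner product spaces, a : V × V → ℝ a coercive, bounded bilinear form, and b : V × Q → ℝ a bilinear form satisfying the inf-sup condition: there exists β > 0 with sup_{v ≠ 0} b(v,q)/‖v‖ ≥ β‖q‖ for all q ∈ Q. Then for every f ∈ V* and g ∈ Q* the saddle point problem a(u,v) + b(v,p) = f(v) for all v ∈ V, b(u,q) = g(q) for all q ∈ Q, has a unique solution (u,p) ∈ V × Q. -/
/-! The saddle point problem is a square linear system `Φ (u, p) = (f, g)` between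
`V × Q` and `V* × Q*`, which have the same finite dimension, so it suffices that `Φ` is
injective. If `Φ (u, p) = 0`, testing the first equation with `v = u` and the second with
`q = p` gives `a u u = 0`, so `u = 0` by coercivity; then `b (·) p = 0`, and the inf-sup
condition forces `p = 0`. -/

theorem eq_zero_of_coercive {V : Type*} [NormedAddCommGroup V] (a : V → V → ℝ) {α : ℝ}
    (hα : 0 < α) {v : V} (hcoer : α * ‖v‖ ^ 2 ≤ a v v) (hv : a v v ≤ 0) : v = 0 := by
  have : ‖v‖ ^ 2 ≤ 0 := by nlinarith
  simpa using this

theorem eq_zero_of_infSup {V Q : Type*} [NormedAddCommGroup V] [NormedAddCommGroup Q]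
    (b : V → Q → ℝ) {β : ℝ} (hβ : 0 < β) {q : Q}
    (hinfsup : β * ‖q‖ ≤ ⨆ v : {v : V // v ≠ 0}, b v q / ‖(v : V)‖)
    (hq : ∀ v, b v q = 0) : q = 0 := by
  -- `Real.iSup_const_zero` also covers `V = 0`, where the supremum is over an empty type.
  simp only [hq, zero_div, Real.iSup_const_zero] at hinfsup
  have : ‖q‖ ≤ 0 := by nlinarith [norm_nonneg q]
  simpa using this

section SaddlePoint

variable {V Q : Type*} [AddCommGroup V] [Module ℝ V] [AddCommGroup Q] [Module ℝ Q]

/-- The operator `(u, p) ↦ (a u · + b · p, b u ·)` of the saddle point problem. -/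
def saddlePointOperator (a : V →ₗ[ℝ] V →ₗ[ℝ] ℝ) (b : V →ₗ[ℝ] Q →ₗ[ℝ] ℝ) :
    (V × Q) →ₗ[ℝ] (V →ₗ[ℝ] ℝ) × (Q →ₗ[ℝ] ℝ) :=
  LinearMap.prod (a.comp (LinearMap.fst ℝ V Q) + b.flip.comp (LinearMap.snd ℝ V Q))
    (b.comp (LinearMap.fst ℝ V Q))

theorem saddlePointOperator_eq_iff (a : V →ₗ[ℝ] V →ₗ[ℝ] ℝ) (b : V →ₗ[ℝ] Q →ₗ[ℝ] ℝ)
    (up : V × Q) (f : V →ₗ[ℝ] ℝ) (g : Q →ₗ[ℝ] ℝ) :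
    saddlePointOperator a b up = (f, g) ↔
      (∀ v : V, a up.1 v + b v up.2 = f v) ∧ ∀ q : Q, b up.1 q = g q := by
  simp [saddlePointOperator, Prod.ext_iff, LinearMap.ext_iff]

theorem saddlePointOperator_bijective_of_injective [FiniteDimensional ℝ V]
    [FiniteDimensional ℝ Q] (a : V →ₗ[ℝ] V →ₗ[ℝ] ℝ) (b : V →ₗ[ℝ] Q →ₗ[ℝ] ℝ)
    (hinj : Function.Injective (saddlePointOperator a b)) :
    Function.Bijective (saddlePointOperator a b) := by
  have hdim : Module.finrank ℝ (V × Q) =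
      Module.finrank ℝ ((V →ₗ[ℝ] ℝ) × (Q →ₗ[ℝ] ℝ)) := by
    simp [Module.finrank_prod]
  exact ⟨hinj, (LinearMap.injective_iff_surjective_of_finrank_eq_finrank hdim).mp hinj⟩

end SaddlePoint

theorem saddlePointOperator_injective {V Q : Type*}
    [NormedAddCommGroup V] [NormedSpace ℝ V] [NormedAddCommGroup Q] [NormedSpace ℝ Q]
    (a : V →ₗ[ℝ] V →ₗ[ℝ] ℝ) (b : V →ₗ[ℝ] Q →ₗ[ℝ] ℝ)
    {α : ℝ} (hα : 0 < α) (hcoer : ∀ v : V, α * ‖v‖ ^ 2 ≤ a v v)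
    {β : ℝ} (hβ : 0 < β)
    (hinfsup : ∀ q : Q, β * ‖q‖ ≤ ⨆ v : {v : V // v ≠ 0}, b v q / ‖(v : V)‖) :
    Function.Injective (saddlePointOperator a b) := by
  rw [← LinearMap.ker_eq_bot, LinearMap.ker_eq_bot']
  rintro ⟨u, p⟩ h0
  obtain ⟨hfirst, hsecond⟩ := (saddlePointOperator_eq_iff a b (u, p) 0 0).mp h0
  simp only [LinearMap.zero_apply] at hfirst hsecond
  have hu : u = 0 :=
    eq_zero_of_coercive (fun v w => a v w) hα (hcoer u)
      (by linarith [hfirst u, hsecond p])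
  have hp : p = 0 :=
    eq_zero_of_infSup (fun v q => b v q) hβ (hinfsup p)
      (fun v => by simpa [hu] using hfirst v)
  simp [hu, hp]

theorem saddle_point_problem_unique_solution_general
    (V Q : Type*)
    [NormedAddCommGroup V] [InnerProductSpace ℝ V] [FiniteDimensional ℝ V]
    [NormedAddCommGroup Q] [InnerProductSpace ℝ Q] [FiniteDimensional ℝ Q]
    (a : V →ₗ[ℝ] V →ₗ[ℝ] ℝ) (b : V →ₗ[ℝ] Q →ₗ[ℝ] ℝ)
    (α : ℝ) (hα : 0 < α) (hcoer : ∀ v : V, α * ‖v‖ ^ 2 ≤ a v v)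
    (β : ℝ) (hβ : 0 < β)
    (hinfsup : ∀ q : Q, β * ‖q‖ ≤ ⨆ v : {v : V // v ≠ 0}, b v q / ‖(v : V)‖)
    (f : V →ₗ[ℝ] ℝ) (g : Q →ₗ[ℝ] ℝ) :
    ∃! up : V × Q,
      (∀ v : V, a up.1 v + b v up.2 = f v) ∧ ∀ q : Q, b up.1 q = g q := by
  have hbij := saddlePointOperator_bijective_of_injective a b
    (saddlePointOperator_injective a b hα hcoer hβ hinfsup)
  simpa only [saddlePointOperator_eq_iff] using hbij.existsUnique (f, g)

/-- Finite dimensional saddle point (Babuška–Brezzi) theory: with `a` coercive and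
bounded and `b` satisfying the inf-sup condition, the saddle point problem has a
unique solution `(u, p)` for all right-hand sides `f ∈ V*`, `g ∈ Q*`. -/
theorem saddle_point_problem_unique_solution
    (V Q : Type*)
    [NormedAddCommGroup V] [InnerProductSpace ℝ V] [FiniteDimensional ℝ V]
    [NormedAddCommGroup Q] [InnerProductSpace ℝ Q] [FiniteDimensional ℝ Q]
    (a : V →ₗ[ℝ] V →ₗ[ℝ] ℝ) (b : V →ₗ[ℝ] Q →ₗ[ℝ] ℝ)
    (α : ℝ) (hα : 0 < α) (hcoer : ∀ v : V, α * ‖v‖ ^ 2 ≤ a v v)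
    (Ma : ℝ) (hbdd : ∀ u v : V, |a u v| ≤ Ma * ‖u‖ * ‖v‖)
    (β : ℝ) (hβ : 0 < β)
    (hinfsup : ∀ q : Q, β * ‖q‖ ≤ ⨆ v : {v : V // v ≠ 0}, b v q / ‖(v : V)‖)
    (f : V →ₗ[ℝ] ℝ) (g : Q →ₗ[ℝ] ℝ) :
    ∃! up : V × Q,
      (∀ v : V, a up.1 v + b v up.2 = f v) ∧ ∀ q : Q, b up.1 q = g q :=
  saddle_point_problem_unique_solution_general V Q a b α hα hcoer β hβ hinfsup f g
end

section
/- Let V be a finite dimensional inner product space and a_h(u,v) = ν(∇u,∇v) − ⟨ν ∂_n u, v⟩_Γ − ⟨u, ν ∂_n v⟩_Γ + γ ν h^{-1} ⟨u,v⟩_Γ the symmetric Nitsche bilinear form on a finite element space V_h. Suppose the inverse trace inequality ‖∂_n v‖²_{L²(Γ)} ≤ C_I h^{-1} ‖∇v‖²_{L²(Ω)} holds on V_h. Then for γ > C_I the form a_h is coercive on V_h with respect to the norm ‖v‖_h² = ν‖∇v‖²_{L²(Ω)} + ν h^{-1}‖v‖²_{L²(Γ)}: there exists α > 0 with a_h(v,v)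 ≥ α ‖v‖_h² for all v ∈ V_h. (Abstract version: for bilinear forms a(u,v) = A(u,v) − B(u,v) − B(v,u) + γ C(u,v) with A, C positive semidefinite quadratic forms satisfying B(v,v)² ≤ C_I A(v,v) C(v,v), coercivity a(v,v) ≥ α (A(v,v) + γ C(v,v)) holds for γ sufficiently large.) -/
/-- Abstract Nitsche coercivity: for `a(v,v) = A(v,v) − 2B(v,v) + γ C(v,v)` with `A`,
`C` positive semidefinite quadratic forms and the (inverse-trace type) bound
`B(v,v)² ≤ C_I A(v,v) C(v,v)`, the form is coercive with respect to
`A(v,v) + γ C(v,v)` for all sufficiently large penalty parameters `γ`. -/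
theorem nitsche_abstract_coercivity
    (V : Type*) [AddCommGroup V] [Module ℝ V]
    (A B C : V → ℝ) (hA : ∀ v, 0 ≤ A v) (hC : ∀ v, 0 ≤ C v)
    (CI : ℝ) (hCI : 0 ≤ CI) (hB : ∀ v, (B v) ^ 2 ≤ CI * A v * C v) :
    ∃ γ0 : ℝ, ∀ γ ≥ γ0, ∃ α > (0 : ℝ), ∀ v : V,
      α * (A v + γ * C v) ≤ A v - 2 * B v + γ * C v := by
  refine ⟨4 * CI, fun γ hγ => ⟨1/2, by norm_num, fun v => ?_⟩⟩
  have hAv := hA v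
  have hCv := hC v
  have hBv := hB v
  -- key: 2 * B v ≤ (1/2) * A v + 2 * CI * C v
  have hS : 0 ≤ (1/2) * A v + 2 * CI * C v := by positivity
  have hsq : (2 * B v) ^ 2 ≤ ((1/2) * A v + 2 * CI * C v) ^ 2 := by
    nlinarith [sq_nonneg ((1/2) * A v - 2 * CI * C v)]
  have hkey : 2 * B v ≤ (1/2) * A v + 2 * CI * C v := by
    nlinarith [abs_nonneg (2 * B v), le_abs_self (2 * B v), sq_abs (2 * B v),
      sq_nonneg (|2 * B v| + ((1/2) * A v + 2 * CI * C v))]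
  nlinarith [mul_nonneg (sub_nonneg.2 hγ) hCv]
end

section
/- Let J = [[A, Bᵀ],[B, 0]] with A ∈ ℝ^{R×R} symmetric positive definite and B ∈ ℝ^{S×R} of full row rank, and let P = [[A, 0],[0, S]] with S = B A^{-1} Bᵀ the Schur complement. Then the preconditioned matrix T = P^{-1} J satisfies the polynomial identity (T − I)(T² − T − I) = 0, so T has at most three distinct eigenvalues: 1, (1+√5)/2, and (1−√5)/2. -/
open Matrix

private lemma fromBlocks_sub' {l m n o α : Type*} [Sub α]
    (A : Matrix n l α) (B : Matrix n m α) (C : Matrix o l α) (D : Matrix o m α)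
    (A' : Matrix n l α) (B' : Matrix n m α) (C' : Matrix o l α) (D' : Matrix o m α) :
    fromBlocks A B C D - fromBlocks A' B' C' D' =
      fromBlocks (A - A') (B - B') (C - C') (D - D') := by
  ext (i | i) (j | j) <;> simp [fromBlocks]

/-- For the ideal block diagonal Schur complement preconditioner
`P = [[A,0],[0, B A⁻¹ Bᵀ]]` of the saddle point matrix `J = [[A, Bᵀ],[B, 0]]`, the
preconditioned matrix `T = P⁻¹ J` satisfies `(T − I)(T² − T − I) = 0`; hence its
spectrum is contained in `{1, (1+√5)/2, (1−√5)/2}`. -/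
theorem schur_preconditioned_polynomial_identity
    (R S : ℕ)
    (A : Matrix (Fin R) (Fin R) ℝ) (hA : A.PosDef)
    (B : Matrix (Fin S) (Fin R) ℝ) (hB : B.rank = S)
    (J P T : Matrix (Fin R ⊕ Fin S) (Fin R ⊕ Fin S) ℝ)
    (hJ : J = Matrix.fromBlocks A Bᵀ B 0)
    (hP : P = Matrix.fromBlocks A 0 0 (B * A⁻¹ * Bᵀ))
    (hT : T = P⁻¹ * J) :
    (T - 1) * (T * T - T - 1) = 0 ∧
    spectrum ℝ T ⊆ {1, (1 + Real.sqrt 5) / 2, (1 - Real.sqrt 5) / 2} := by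
  -- B has full row rank, hence `B.mulVecLin` is surjective
  have hBsurj : LinearMap.range B.mulVecLin = ⊤ := by
    apply Submodule.eq_top_of_finrank_eq
    rw [← Matrix.rank, hB, Module.finrank_pi]
    simp
  -- the Schur complement is positive definite
  have hAinv : (A⁻¹).PosDef := hA.inv
  have hS : (B * A⁻¹ * Bᵀ).PosDef := by
    have hpsd : (B * A⁻¹ * Bᴴ).PosSemidef := hAinv.posSemidef.mul_mul_conjTranspose_same B
    have hBH : Bᴴ = Bᵀ := rfl
    rw [hBH] at hpsd
    refine Matrix.PosDef.of_dotProduct_mulVec_pos hpsd.1 (fun x hx => ?_)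
    have hBx : Bᵀ *ᵥ x ≠ 0 := by
      intro h
      apply hx
      have hx0 : ∀ v : Fin R → ℝ, x ⬝ᵥ (B *ᵥ v) = 0 := by
        intro v
        rw [dotProduct_mulVec, ← mulVec_transpose, h, zero_dotProduct]
      have : x ⬝ᵥ x = 0 := by
        obtain ⟨v, hv⟩ := (LinearMap.range_eq_top.mp hBsurj) x
        have hv' : B *ᵥ v = x := hv
        calc x ⬝ᵥ x = x ⬝ᵥ (B *ᵥ v) := by rw [hv']
          _ = 0 := hx0 v
      exact dotProduct_self_eq_zero.mp this
    have := hAinv.dotProduct_mulVec_pos hBx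
    simpa [Matrix.mulVec_mulVec, dotProduct_mulVec, vecMul_transpose,
      Matrix.dotProduct_mulVec x, ← Matrix.mulVec_transpose, Matrix.mul_assoc,
      show A⁻¹ᵀ = A⁻¹ from hAinv.1] using this
  have hAdet : IsUnit A.det := isUnit_iff_ne_zero.mpr (ne_of_gt hA.det_pos)
  have hSdet : IsUnit (B * A⁻¹ * Bᵀ).det := isUnit_iff_ne_zero.mpr (ne_of_gt hS.det_pos)
  -- the inverse of P
  have hPinv : P⁻¹ = Matrix.fromBlocks A⁻¹ 0 0 (B * A⁻¹ * Bᵀ)⁻¹ := by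
    apply Matrix.inv_eq_right_inv
    rw [hP, Matrix.fromBlocks_multiply]
    simp [Matrix.mul_nonsing_inv _ hAdet, Matrix.mul_nonsing_inv _ hSdet,
      ← Matrix.fromBlocks_one]
  -- explicit block form of T
  have hTb : T = Matrix.fromBlocks 1 (A⁻¹ * Bᵀ) ((B * A⁻¹ * Bᵀ)⁻¹ * B) 0 := by
    rw [hT, hPinv, hJ, Matrix.fromBlocks_multiply]
    simp [Matrix.nonsing_inv_mul _ hAdet]
  -- key cancellation
  have hYX : ((B * A⁻¹ * Bᵀ)⁻¹ * B) * (A⁻¹ * Bᵀ) = 1 := by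
    rw [Matrix.mul_assoc, ← Matrix.mul_assoc B, Matrix.nonsing_inv_mul _ hSdet]
  have hkey : (T - 1) * (T * T - T - 1) = 0 := by
    rw [hTb, ← Matrix.fromBlocks_one]
    rw [Matrix.fromBlocks_multiply]
    simp only [Matrix.mul_one, Matrix.one_mul, Matrix.mul_zero, Matrix.zero_mul,
      add_zero, zero_add, hYX]
    rw [show (Matrix.fromBlocks (1 + (A⁻¹ * Bᵀ) * ((B * A⁻¹ * Bᵀ)⁻¹ * B)) (A⁻¹ * Bᵀ)
        ((B * A⁻¹ * Bᵀ)⁻¹ * B) 1 : Matrix (Fin R ⊕ Fin S) (Fin R ⊕ Fin S) ℝ) -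
        Matrix.fromBlocks 1 (A⁻¹ * Bᵀ) ((B * A⁻¹ * Bᵀ)⁻¹ * B) 0 -
        Matrix.fromBlocks 1 0 0 1 =
        Matrix.fromBlocks ((A⁻¹ * Bᵀ) * ((B * A⁻¹ * Bᵀ)⁻¹ * B) - 1) 0 0 0 by
      rw [fromBlocks_sub', fromBlocks_sub']; congr 1 <;> abel]
    rw [show Matrix.fromBlocks 1 (A⁻¹ * Bᵀ) ((B * A⁻¹ * Bᵀ)⁻¹ * B) 0 -
        Matrix.fromBlocks (1 : Matrix (Fin R) (Fin R) ℝ) 0 0 1 =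
        Matrix.fromBlocks 0 (A⁻¹ * Bᵀ) ((B * A⁻¹ * Bᵀ)⁻¹ * B) (-1) by
      rw [fromBlocks_sub']; congr 1 <;> simp]
    rw [Matrix.fromBlocks_multiply]
    have h2 : ((B * A⁻¹ * Bᵀ)⁻¹ * B) * ((A⁻¹ * Bᵀ) * ((B * A⁻¹ * Bᵀ)⁻¹ * B) - 1) = 0 := by
      rw [Matrix.mul_sub, ← Matrix.mul_assoc, hYX, Matrix.mul_one, Matrix.one_mul, sub_self]
    simp [h2, ← Matrix.fromBlocks_zero]
  refine ⟨hkey, ?_⟩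
  -- spectral consequence
  intro μ hμ
  have hpoly : (Polynomial.aeval T)
      ((Polynomial.X - 1) * (Polynomial.X ^ 2 - Polynomial.X - 1) : Polynomial ℝ) = 0 := by
    simp only [_root_.map_mul, _root_.map_sub, _root_.map_one, _root_.map_pow, Polynomial.aeval_X]
    rw [sq]
    exact hkey
  have hmem := spectrum.subset_polynomial_aeval T
    ((Polynomial.X - 1) * (Polynomial.X ^ 2 - Polynomial.X - 1) : Polynomial ℝ)
    ⟨μ, hμ, rfl⟩
  rw [hpoly] at hmem
  have heval : (μ - 1) * (μ ^ 2 - μ - 1) = 0 := by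
    by_contra h
    have : IsUnit ((algebraMap ℝ (Matrix (Fin R ⊕ Fin S) (Fin R ⊕ Fin S) ℝ))
        (Polynomial.eval μ ((Polynomial.X - 1) * (Polynomial.X ^ 2 - Polynomial.X - 1))) - 0) := by
      rw [sub_zero]
      apply IsUnit.map
      apply isUnit_iff_ne_zero.mpr
      simpa using h
    exact spectrum.mem_iff.mp hmem this
  have h5 : Real.sqrt 5 ^ 2 = 5 := Real.sq_sqrt (by norm_num)
  rcases mul_eq_zero.mp heval with h1 | h2
  · left; linarith [sub_eq_zero.mp h1]
  · have hfac : (μ - (1 + Real.sqrt 5) / 2) * (μ - (1 - Real.sqrt 5) / 2) = 0 := by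
      nlinarith [h2, h5]
    rcases mul_eq_zero.mp hfac with h | h
    · right; left; linarith [sub_eq_zero.mp h]
    · right; right; have := sub_eq_zero.mp h; simp [this]
end
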